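/- Let X be a finite poset and f : B → C a chain map of bounded chain complexes of R-modules, where in each degree B_k = ⊕_{σ∈X} B_k(σ) and C_k = ⊕_{σ∈X} C_k(σ), and both the differentials and f are upper triangular with respect to X (components vanish unless the target index τ satisfies τ ≥ σ). If for each σ ∈ X the diagonal component f(σ,σ) : B(σ) → C(σ) is a quasi-isomorphism of complexes (with the diagonal differentials), then f is a quasi-isomorphism. -/

import Mathlib

open DirectSum

section

variable {R : Type*} [Ring R] {X : Type*} [Fintype X] [PartialOrder X] [DecidableEq X]

/-- A linear map `g : ⊕_σ P(σ) → ⊕_σ Q(σ)` is upper triangular (over the poset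
`X`) if its `(τ,σ)`-component vanishes unless `τ ≥ σ`. -/
def IsUpperTriangularMap {P Q : X → Type*}
    [∀ σ, AddCommGroup (P σ)] [∀ σ, Module R (P σ)]
    [∀ σ, AddCommGroup (Q σ)] [∀ σ, Module R (Q σ)]
    (g : (⨁ σ, P σ) →ₗ[R] ⨁ σ, Q σ) : Prop :=
  ∀ σ τ : X, ¬ σ ≤ τ →
    (DirectSum.component R X Q τ).comp (g.comp (DirectSum.lof R X P σ)) = 0

/-- A degreewise map `u` of `ℤ`-indexed complexes `(M,dM)`, `(N,dN)` is a
quasi-isomorphism: elementwise, it induces a bijection on homology in every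
degree (stated here in degree `k - 1` for all `k ∈ ℤ`). -/
def IsQuasiIso {M N : ℤ → Type*}
    [∀ k, AddCommGroup (M k)] [∀ k, Module R (M k)]
    [∀ k, AddCommGroup (N k)] [∀ k, Module R (N k)]
    (dM : ∀ k : ℤ, M k →ₗ[R] M (k - 1)) (dN : ∀ k : ℤ, N k →ₗ[R] N (k - 1))
    (u : ∀ k : ℤ, M k →ₗ[R] N k) : Prop :=
  ∀ k : ℤ,
    -- surjectivity on homology in degree `k - 1`
    (∀ y : N (k - 1), dN (k - 1) y = 0 →
      ∃ x : M (k - 1), dM (k - 1) x = 0 ∧ ∃ z : N k, u (k - 1) x - y = dN k z) ∧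
    -- injectivity on homology in degree `k - 1`
    (∀ x : M (k - 1), dM (k - 1) x = 0 →
      (∃ z : N k, u (k - 1) x = dN k z) → ∃ w : M k, dM k w = x)

end

open DirectSum

section Aux

variable {R : Type*} [Ring R] {X : Type*} [Fintype X] [PartialOrder X] [DecidableEq X]

/-- supported in `S` -/
def SuppIn {P : X → Type*} [∀ σ, AddCommGroup (P σ)] [∀ σ, Module R (P σ)]
    (S : Finset X) (v : ⨁ σ, P σ) : Prop :=
  ∀ τ ∉ S, v τ = 0

variable {P Q : X → Type*}
    [∀ σ, AddCommGroup (P σ)] [∀ σ, Module R (P σ)]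
    [∀ σ, AddCommGroup (Q σ)] [∀ σ, Module R (Q σ)]

lemma apply_eq_sum (g : (⨁ σ, P σ) →ₗ[R] ⨁ σ, Q σ) (x : ⨁ σ, P σ) (τ : X) :
    g x τ = ∑ σ : X, (g (DirectSum.lof R X P σ (x σ))) τ := by
  conv_lhs => rw [← DirectSum.sum_univ_of x]
  rw [map_sum, DFinsupp.finset_sum_apply]
  simp [DirectSum.lof_eq_of]

lemma suppin_zero (S : Finset X) : SuppIn (R := R) (P := P) S 0 :=
  fun τ _ => rfl

lemma suppin_lof {S : Finset X} {σ : X} (hσ : σ ∈ S) (b : P σ) :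
    SuppIn (R := R) S (DirectSum.lof R X P σ b) := by
  intro τ hτ
  have hne : σ ≠ τ := by rintro rfl; exact hτ hσ
  rw [DirectSum.lof_eq_of]
  exact DirectSum.of_eq_of_ne _ _ _ hne.symm

lemma suppin_map {g : (⨁ σ, P σ) →ₗ[R] ⨁ σ, Q σ} (hg : IsUpperTriangularMap g)
    {S : Finset X} (hS : ∀ a ∈ S, ∀ b, a ≤ b → b ∈ S) {x : ⨁ σ, P σ}
    (hx : SuppIn (R := R) S x) : SuppIn (R := R) S (g x) := by
  intro τ hτ
  rw [apply_eq_sum]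
  refine Finset.sum_eq_zero fun σ _ => ?_
  by_cases hσ : σ ∈ S
  · have hle : ¬ σ ≤ τ := fun hle => hτ (hS σ hσ τ hle)
    exact DFunLike.congr_fun (hg σ τ hle) (x σ)
  · rw [hx σ hσ]; simp

lemma diag_apply {g : (⨁ σ, P σ) →ₗ[R] ⨁ σ, Q σ} (hg : IsUpperTriangularMap g)
    {S : Finset X} {σ : X} (hσ : σ ∈ S) (hmin : ∀ τ ∈ S, τ ≤ σ → τ = σ)
    {x : ⨁ σ, P σ} (hx : SuppIn (R := R) S x) :
    g x σ = (g (DirectSum.lof R X P σ (x σ))) σ := by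
  rw [apply_eq_sum]
  refine Finset.sum_eq_single_of_mem σ (Finset.mem_univ σ) fun τ _ hne => ?_
  by_cases hτ : τ ∈ S
  · have hle : ¬ τ ≤ σ := fun hle => hne (hmin τ hτ hle)
    exact DFunLike.congr_fun (hg τ σ hle) (x τ)
  · rw [hx τ hτ]; simp

lemma suppin_mono {S S' : Finset X} (hsub : S' ⊆ S) {v : ⨁ σ, P σ}
    (hv : SuppIn (R := R) S' v) : SuppIn (R := R) S v :=
  fun τ hτ => hv τ fun h => hτ (hsub h)

lemma suppin_erase {S : Finset X} {σ : X} {v : ⨁ σ, P σ} :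
    SuppIn (R := R) (S.erase σ) v ↔ SuppIn (R := R) S v ∧ v σ = 0 := by
  constructor
  · intro h
    exact ⟨fun τ hτ => h τ fun hmem => hτ (Finset.mem_of_mem_erase hmem),
      h σ (Finset.notMem_erase σ S)⟩
  · rintro ⟨h1, h2⟩ τ hτ
    by_cases hts : τ = σ
    · subst hts; exact h2
    · exact h1 τ fun hmem => hτ (Finset.mem_erase_of_ne_of_mem hts hmem)

lemma suppin_sub {S : Finset X} {v w : ⨁ σ, P σ} (hv : SuppIn (R := R) S v)
    (hw : SuppIn (R := R) S w) : SuppIn (R := R) S (v - w) := by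
  intro τ hτ
  rw [DFinsupp.sub_apply, hv τ hτ, hw τ hτ, sub_zero]

lemma suppin_add {S : Finset X} {v w : ⨁ σ, P σ} (hv : SuppIn (R := R) S v)
    (hw : SuppIn (R := R) S w) : SuppIn (R := R) S (v + w) := by
  intro τ hτ
  rw [DFinsupp.add_apply, hv τ hτ, hw τ hτ, add_zero]

end Aux

section Cast

variable {R : Type*} [Ring R]

/-- cast along an equality of degrees -/
def ecast {M : ℤ → Type*} [∀ k, AddCommGroup (M k)] [∀ k, Module R (M k)]
    {j k : ℤ} (h : j = k) : M j ≃ₗ[R] M k := by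
  subst h; exact LinearEquiv.refl R (M j)

lemma ecast_natural {M N : ℤ → Type*}
    [∀ k, AddCommGroup (M k)] [∀ k, Module R (M k)]
    [∀ k, AddCommGroup (N k)] [∀ k, Module R (N k)]
    (u : ∀ j : ℤ, M j →ₗ[R] N j) {j k : ℤ} (h : j = k) (v : M j) :
    u k (ecast (R := R) h v) = ecast (R := R) h (u j v) := by
  subst h; rfl

lemma ecast_natural_shift {M N : ℤ → Type*}
    [∀ k, AddCommGroup (M k)] [∀ k, Module R (M k)]
    [∀ k, AddCommGroup (N k)] [∀ k, Module R (N k)]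
    (u : ∀ j : ℤ, M j →ₗ[R] N (j - 1)) {j k : ℤ} (h : j = k) (h' : j - 1 = k - 1)
    (v : M j) :
    u k (ecast (R := R) h v) = ecast (R := R) h' (u j v) := by
  subst h; rfl

lemma ecast_suppin {X : Type*} [Fintype X] [DecidableEq X] {P : ℤ → X → Type*}
    [∀ k σ, AddCommGroup (P k σ)] [∀ k σ, Module R (P k σ)]
    {j k : ℤ} (h : j = k) (S : Finset X) (v : ⨁ σ, P j σ)
    (hv : SuppIn (R := R) S v) :
    SuppIn (R := R) S (ecast (R := R) (M := fun j => ⨁ σ, P j σ) h v) := by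
  subst h; exact hv

end Cast

set_option linter.unusedSectionVars false
set_option linter.unusedVariables false
set_option maxHeartbeats 1000000

lemma key_induction
    {R : Type*} [Ring R] {X : Type*} [Fintype X] [PartialOrder X] [DecidableEq X]
    (B C : ℤ → X → Type*)
    [∀ k σ, AddCommGroup (B k σ)] [∀ k σ, Module R (B k σ)]
    [∀ k σ, AddCommGroup (C k σ)] [∀ k σ, Module R (C k σ)]
    (dB : ∀ k : ℤ, (⨁ σ, B k σ) →ₗ[R] ⨁ σ, B (k - 1) σ)
    (dC : ∀ k : ℤ, (⨁ σ, C k σ) →ₗ[R] ⨁ σ, C (k - 1) σ)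
    (f : ∀ k : ℤ, (⨁ σ, B k σ) →ₗ[R] ⨁ σ, C k σ)
    (hdB : ∀ k : ℤ, (dB (k - 1)).comp (dB k) = 0)
    (hdC : ∀ k : ℤ, (dC (k - 1)).comp (dC k) = 0)
    (hchain : ∀ k : ℤ, (f (k - 1)).comp (dB k) = (dC k).comp (f k))
    (hUTB : ∀ k : ℤ, IsUpperTriangularMap (dB k))
    (hUTC : ∀ k : ℤ, IsUpperTriangularMap (dC k))
    (hUTf : ∀ k : ℤ, IsUpperTriangularMap (f k))
    (hdiag : ∀ σ : X, IsQuasiIso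
      (fun k => (DirectSum.component R X (B (k - 1) ·) σ).comp
        ((dB k).comp (DirectSum.lof R X (B k ·) σ)))
      (fun k => (DirectSum.component R X (C (k - 1) ·) σ).comp
        ((dC k).comp (DirectSum.lof R X (C k ·) σ)))
      (fun k => (DirectSum.component R X (C k ·) σ).comp
        ((f k).comp (DirectSum.lof R X (B k ·) σ)))) :
    ∀ S : Finset X, (∀ a ∈ S, ∀ b, a ≤ b → b ∈ S) → ∀ k : ℤ,
      (∀ y : ⨁ σ, C (k-1) σ, SuppIn (R := R) S y → dC (k-1) y = 0 →
        ∃ x : ⨁ σ, B (k-1) σ, SuppIn (R := R) S x ∧ dB (k-1) x = 0 ∧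
          ∃ z : ⨁ σ, C k σ, SuppIn (R := R) S z ∧ f (k-1) x - y = dC k z) ∧
      (∀ x : ⨁ σ, B (k-1) σ, SuppIn (R := R) S x → dB (k-1) x = 0 →
        (∃ z : ⨁ σ, C k σ, SuppIn (R := R) S z ∧ f (k-1) x = dC k z) →
        ∃ w : ⨁ σ, B k σ, SuppIn (R := R) S w ∧ dB k w = x) := by
  intro S
  induction S using Finset.strongInduction with
  | _ S ih =>
  intro hS k
  rcases S.eq_empty_or_nonempty with rfl | hne
  · constructor
    · intro y hy hyc
      have hy0 : y = 0 := DFinsupp.ext fun τ => hy τ (Finset.notMem_empty τ)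
      refine ⟨0, suppin_zero _, by simp, 0, suppin_zero _, by simp [hy0]⟩
    · intro x hx hxc _
      have hx0 : x = 0 := DFinsupp.ext fun τ => hx τ (Finset.notMem_empty τ)
      exact ⟨0, suppin_zero _, by simp [hx0]⟩
  · obtain ⟨σ, hσS, hσmin'⟩ := S.exists_minimal hne
    have hmin : ∀ τ ∈ S, τ ≤ σ → τ = σ := fun τ hτ hle =>
      le_antisymm hle (hσmin' hτ hle)
    have hS' : ∀ a ∈ S.erase σ, ∀ b, a ≤ b → b ∈ S.erase σ := by
      intro a ha b hab
      have haS := Finset.mem_of_mem_erase ha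
      refine Finset.mem_erase_of_ne_of_mem (fun hbs => ?_) (hS a haS b hab)
      subst hbs
      exact (Finset.ne_of_mem_erase ha) (hmin a haS hab)
    have IH := ih (S.erase σ) (Finset.erase_ssubset hσS) hS'
    have hsub : S.erase σ ⊆ S := Finset.erase_subset σ S
    constructor
    · -- SURJECTIVITY
      intro y hy hyc
      have h1 : (dC (k-1) (DirectSum.lof R X (C (k-1) ·) σ (y σ))) σ = 0 := by
        rw [← diag_apply (hUTC (k-1)) hσS hmin hy, hyc]
        simp
      obtain ⟨aσ, haσ₀, zσ, hzσ₀⟩ := (hdiag σ k).1 (y σ) h1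
      have haσ : (dB (k-1) (DirectSum.lof R X (B (k-1) ·) σ aσ)) σ = 0 := haσ₀
      have hzσ : (f (k-1) (DirectSum.lof R X (B (k-1) ·) σ aσ)) σ - y σ
          = (dC k (DirectSum.lof R X (C k ·) σ zσ)) σ := hzσ₀
      have ha_supp : SuppIn (R := R) S (DirectSum.lof R X (B (k-1) ·) σ aσ) :=
        suppin_lof hσS aσ
      have hb_supp : SuppIn (R := R) (S.erase σ)
          (dB (k-1) (DirectSum.lof R X (B (k-1) ·) σ aσ)) :=
        suppin_erase.mpr ⟨suppin_map (hUTB (k-1)) hS ha_supp, haσ⟩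
      have hb_cyc : dB ((k-1)-1) (dB (k-1) (DirectSum.lof R X (B (k-1) ·) σ aσ)) = 0 := by
        simpa using LinearMap.congr_fun (hdB (k-1)) (DirectSum.lof R X (B (k-1) ·) σ aσ)
      obtain ⟨c, hc_def⟩ : ∃ c, c = f (k-1) (DirectSum.lof R X (B (k-1) ·) σ aσ) - y
          - dC k (DirectSum.lof R X (C k ·) σ zσ) := ⟨_, rfl⟩
      have hc_supp : SuppIn (R := R) (S.erase σ) c := by
        rw [hc_def]
        refine suppin_erase.mpr ⟨suppin_sub (suppin_sub (suppin_map (hUTf (k-1)) hS ha_supp) hy)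
          (suppin_map (hUTC k) hS (suppin_lof hσS zσ)), ?_⟩
        rw [DFinsupp.sub_apply, DFinsupp.sub_apply, hzσ, sub_self]
      have hc_eq : dC (k-1) c = f ((k-1)-1) (dB (k-1) (DirectSum.lof R X (B (k-1) ·) σ aσ)) := by
        have h3 : dC (k-1) (dC k (DirectSum.lof R X (C k ·) σ zσ)) = 0 := by
          simpa using LinearMap.congr_fun (hdC k) (DirectSum.lof R X (C k ·) σ zσ)
        have h4 : dC (k-1) (f (k-1) (DirectSum.lof R X (B (k-1) ·) σ aσ))
            = f ((k-1)-1) (dB (k-1) (DirectSum.lof R X (B (k-1) ·) σ aσ)) :=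
          (LinearMap.congr_fun (hchain (k-1)) (DirectSum.lof R X (B (k-1) ·) σ aσ)).symm
        rw [hc_def, map_sub, map_sub, hyc, h3, h4]
        abel
      obtain ⟨w, hw_supp, hw⟩ := (IH (k-1)).2 (dB (k-1) (DirectSum.lof R X (B (k-1) ·) σ aσ))
        hb_supp hb_cyc ⟨c, hc_supp, hc_eq.symm⟩
      have hv_supp : SuppIn (R := R) (S.erase σ) (c - f (k-1) w) :=
        suppin_sub hc_supp (suppin_map (hUTf (k-1)) hS' hw_supp)
      have hv_cyc : dC (k-1) (c - f (k-1) w) = 0 := by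
        have h5 : dC (k-1) (f (k-1) w) = f ((k-1)-1) (dB (k-1) w) :=
          (LinearMap.congr_fun (hchain (k-1)) w).symm
        rw [map_sub, hc_eq, h5, hw, sub_self]
      obtain ⟨x', hx'_supp, hx'_cyc, z', hz'_supp, hz'⟩ := (IH k).1 (c - f (k-1) w) hv_supp hv_cyc
      refine ⟨DirectSum.lof R X (B (k-1) ·) σ aσ - w - x',
        suppin_sub (suppin_sub ha_supp (suppin_mono hsub hw_supp)) (suppin_mono hsub hx'_supp),
        ?_, DirectSum.lof R X (C k ·) σ zσ - z',
        suppin_sub (suppin_lof hσS zσ) (suppin_mono hsub hz'_supp), ?_⟩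
      · rw [map_sub, map_sub, hw, hx'_cyc, sub_zero, sub_self]
      · have h6 : f (k-1) x' = dC k z' + (c - f (k-1) w) := eq_add_of_sub_eq hz'
        simp only [map_sub]
        rw [h6, hc_def]
        abel
    · -- INJECTIVITY
      rintro x hx hxc ⟨z, hz, hfx⟩
      have hd1 : (dB (k-1) (DirectSum.lof R X (B (k-1) ·) σ (x σ))) σ = 0 := by
        rw [← diag_apply (hUTB (k-1)) hσS hmin hx, hxc]
        simp
      have hd2 : (f (k-1) (DirectSum.lof R X (B (k-1) ·) σ (x σ))) σ
          = (dC k (DirectSum.lof R X (C k ·) σ (z σ))) σ := by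
        rw [← diag_apply (hUTf (k-1)) hσS hmin hx, ← diag_apply (hUTC k) hσS hmin hz, hfx]
      obtain ⟨wσ, hwσ₀⟩ := (hdiag σ k).2 (x σ) hd1 ⟨z σ, hd2⟩
      have hwσ : (dB k (DirectSum.lof R X (B k ·) σ wσ)) σ = x σ := hwσ₀
      have hwσ_supp : SuppIn (R := R) S (DirectSum.lof R X (B k ·) σ wσ) := suppin_lof hσS wσ
      obtain ⟨x', hx'def⟩ : ∃ x', x' = x - dB k (DirectSum.lof R X (B k ·) σ wσ) := ⟨_, rfl⟩
      obtain ⟨z'', hz''def⟩ : ∃ z'', z'' = z - f k (DirectSum.lof R X (B k ·) σ wσ) := ⟨_, rfl⟩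
      have hx'_supp : SuppIn (R := R) (S.erase σ) x' := by
        rw [hx'def]
        refine suppin_erase.mpr ⟨suppin_sub hx (suppin_map (hUTB k) hS hwσ_supp), ?_⟩
        rw [DFinsupp.sub_apply, hwσ, sub_self]
      have hx'σ : x' σ = 0 := (suppin_erase.mp hx'_supp).2
      have hx'_cyc : dB (k-1) x' = 0 := by
        have h7 : dB (k-1) (dB k (DirectSum.lof R X (B k ·) σ wσ)) = 0 := by
          simpa using LinearMap.congr_fun (hdB k) (DirectSum.lof R X (B k ·) σ wσ)
        rw [hx'def, map_sub, hxc, h7, sub_zero]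
      have hz''_supp : SuppIn (R := R) S z'' := by
        rw [hz''def]
        exact suppin_sub hz (suppin_map (hUTf k) hS hwσ_supp)
      have hfx' : f (k-1) x' = dC k z'' := by
        have h8 : f (k-1) (dB k (DirectSum.lof R X (B k ·) σ wσ))
            = dC k (f k (DirectSum.lof R X (B k ·) σ wσ)) :=
          LinearMap.congr_fun (hchain k) _
        rw [hx'def, hz''def, map_sub, map_sub, hfx, h8]
      have hz''σ_cyc : (dC k (DirectSum.lof R X (C k ·) σ (z'' σ))) σ = 0 := by
        rw [← diag_apply (hUTC k) hσS hmin hz''_supp, ← hfx',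
          diag_apply (hUTf (k-1)) hσS hmin (suppin_mono hsub hx'_supp), hx'σ]
        simp
      -- casts
      have h1 : (k+1) - 1 = k := add_sub_cancel_right k 1
      have h1' : (k+1) - 1 - 1 = k - 1 := by rw [h1]
      obtain ⟨y₀, hy₀⟩ : ∃ y₀ : C ((k+1)-1) σ,
          z'' σ = ecast (R := R) (M := fun j => C j σ) h1 y₀ :=
        ⟨(ecast (R := R) (M := fun j => C j σ) h1).symm (z'' σ),
          ((ecast (R := R) (M := fun j => C j σ) h1).apply_symm_apply _).symm⟩
      have hy₀_cyc : (dC ((k+1)-1) (DirectSum.lof R X (C ((k+1)-1) ·) σ y₀)) σ = 0 := by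
        have hnat := ecast_natural_shift (R := R) (M := fun j => C j σ) (N := fun j => C j σ)
          (u := fun j => (DirectSum.component R X (C (j-1) ·) σ).comp
            ((dC j).comp (DirectSum.lof R X (C j ·) σ))) h1 h1' y₀
        have hzc : (dC k (DirectSum.lof R X (C k ·) σ
            (ecast (R := R) (M := fun j => C j σ) h1 y₀))) σ = 0 := by
          rw [← hy₀]; exact hz''σ_cyc
        exact (LinearEquiv.map_eq_zero_iff _).mp (Eq.trans hnat.symm hzc)
      obtain ⟨p₀, hp₀₀, q, hq₀⟩ := (hdiag σ (k+1)).1 y₀ hy₀_cyc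
      have hp₀ : (dB ((k+1)-1) (DirectSum.lof R X (B ((k+1)-1) ·) σ p₀)) σ = 0 := hp₀₀
      have hq : (f ((k+1)-1) (DirectSum.lof R X (B ((k+1)-1) ·) σ p₀)) σ - y₀
          = (dC (k+1) (DirectSum.lof R X (C (k+1) ·) σ q)) σ := hq₀
      obtain ⟨p, hp_def⟩ : ∃ p : B k σ,
          p = ecast (R := R) (M := fun j => B j σ) h1 p₀ := ⟨_, rfl⟩
      obtain ⟨Z, hZ_def⟩ : ∃ Z : ⨁ τ, C k τ,
          Z = ecast (R := R) (M := fun j => ⨁ τ, C j τ) h1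
            (dC (k+1) (DirectSum.lof R X (C (k+1) ·) σ q)) := ⟨_, rfl⟩
      have F1 : (dB k (DirectSum.lof R X (B k ·) σ p)) σ = 0 := by
        have hnat := ecast_natural_shift (R := R) (M := fun j => B j σ) (N := fun j => B (j) σ)
          (u := fun j => (DirectSum.component R X (B (j-1) ·) σ).comp
            ((dB j).comp (DirectSum.lof R X (B j ·) σ))) h1 h1' p₀
        rw [hp_def]
        refine Eq.trans hnat ?_
        have hp₀' : ((DirectSum.component R X (B ((k+1)-1-1) ·) σ).comp
            ((dB ((k+1)-1)).comp (DirectSum.lof R X (B ((k+1)-1) ·) σ))) p₀ = 0 := hp₀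
        rw [hp₀']
        exact map_zero _
      have F2 : (f k (DirectSum.lof R X (B k ·) σ p)) σ
          = ecast (R := R) (M := fun j => C j σ) h1
            ((f ((k+1)-1) (DirectSum.lof R X (B ((k+1)-1) ·) σ p₀)) σ) := by
        have hnat := ecast_natural (R := R) (M := fun j => B j σ) (N := fun j => C j σ)
          (u := fun j => (DirectSum.component R X (C j ·) σ).comp
            ((f j).comp (DirectSum.lof R X (B j ·) σ))) h1 p₀
        rw [hp_def]
        exact hnat
      have F3 : dC k Z = 0 := by
        have hnat := ecast_natural_shift (R := R) (M := fun j => ⨁ τ, C j τ)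
          (N := fun j => ⨁ τ, C j τ) (u := dC) h1 h1'
          (dC (k+1) (DirectSum.lof R X (C (k+1) ·) σ q))
        have h0 : dC ((k+1)-1) (dC (k+1) (DirectSum.lof R X (C (k+1) ·) σ q)) = 0 := by
          simpa using LinearMap.congr_fun (hdC (k+1)) (DirectSum.lof R X (C (k+1) ·) σ q)
        rw [hZ_def]
        refine Eq.trans hnat ?_
        rw [h0]
        exact map_zero _
      have F4 : SuppIn (R := R) S Z := by
        rw [hZ_def]
        exact ecast_suppin h1 S _ (suppin_map (hUTC (k+1)) hS (suppin_lof hσS q))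
      have F5 : Z σ = ecast (R := R) (M := fun j => C j σ) h1
          ((dC (k+1) (DirectSum.lof R X (C (k+1) ·) σ q)) σ) := by
        have hnat := ecast_natural (R := R) (M := fun j => ⨁ τ, C j τ) (N := fun j => C j σ)
          (u := fun j => (DirectSum.component R X (C j ·) σ :
            (⨁ τ, C j τ) →ₗ[R] C j σ)) h1
          (dC (k+1) (DirectSum.lof R X (C (k+1) ·) σ q))
        rw [hZ_def]
        exact hnat
      obtain ⟨xt, hxtdef⟩ : ∃ xt, xt = x' - dB k (DirectSum.lof R X (B k ·) σ p) := ⟨_, rfl⟩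
      obtain ⟨zt, hztdef⟩ : ∃ zt,
          zt = z'' - f k (DirectSum.lof R X (B k ·) σ p) + Z := ⟨_, rfl⟩
      have hp_supp : SuppIn (R := R) S (DirectSum.lof R X (B k ·) σ p) := suppin_lof hσS p
      have hxt_supp : SuppIn (R := R) (S.erase σ) xt := by
        rw [hxtdef]
        exact suppin_sub hx'_supp
          (suppin_erase.mpr ⟨suppin_map (hUTB k) hS hp_supp, F1⟩)
      have hxt_cyc : dB (k-1) xt = 0 := by
        have h7 : dB (k-1) (dB k (DirectSum.lof R X (B k ·) σ p)) = 0 := by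
          simpa using LinearMap.congr_fun (hdB k) (DirectSum.lof R X (B k ·) σ p)
        rw [hxtdef, map_sub, hx'_cyc, h7, sub_zero]
      have hzt_supp : SuppIn (R := R) (S.erase σ) zt := by
        rw [hztdef]
        refine suppin_erase.mpr ⟨suppin_add (suppin_sub hz''_supp
          (suppin_map (hUTf k) hS hp_supp)) F4, ?_⟩
        rw [DFinsupp.add_apply, DFinsupp.sub_apply, F5, F2, hy₀, ← map_sub, ← map_add]
        rw [show y₀ - (f ((k+1)-1) (DirectSum.lof R X (B ((k+1)-1) ·) σ p₀)) σ
            + (dC (k+1) (DirectSum.lof R X (C (k+1) ·) σ q)) σ = 0 from by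
          rw [← hq]; abel]
        exact map_zero _
      have hfxt : f (k-1) xt = dC k zt := by
        have h8 : f (k-1) (dB k (DirectSum.lof R X (B k ·) σ p))
            = dC k (f k (DirectSum.lof R X (B k ·) σ p)) :=
          LinearMap.congr_fun (hchain k) _
        rw [hxtdef, hztdef, map_add, map_sub, map_sub, hfx', h8, F3, add_zero]
      obtain ⟨w', hw'_supp, hw'⟩ := (IH k).2 xt hxt_supp hxt_cyc ⟨zt, hzt_supp, hfxt⟩
      refine ⟨w' + DirectSum.lof R X (B k ·) σ wσ + DirectSum.lof R X (B k ·) σ p,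
        suppin_add (suppin_add (suppin_mono hsub hw'_supp) hwσ_supp) hp_supp, ?_⟩
      rw [map_add, map_add, hw', hxtdef, hx'def]
      abel


/-- Let `X` be a finite poset and `f : B → C` a chain map of bounded chain
complexes of `R`-modules with `B_k = ⊕_σ B_k(σ)`, `C_k = ⊕_σ C_k(σ)`, where
the differentials and `f` are upper triangular over `X`.  If for each `σ ∈ X`
the diagonal component `f(σ,σ) : B(σ) → C(σ)` is a quasi-isomorphism (with the
diagonal differentials), then `f` is a quasi-isomorphism. -/
theorem quasi_iso_of_diagonal_quasi_iso
    {R : Type*} [Ring R] {X : Type*} [Fintype X] [PartialOrder X] [DecidableEq X]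
    (B C : ℤ → X → Type*)
    [∀ k σ, AddCommGroup (B k σ)] [∀ k σ, Module R (B k σ)]
    [∀ k σ, AddCommGroup (C k σ)] [∀ k σ, Module R (C k σ)]
    (dB : ∀ k : ℤ, (⨁ σ, B k σ) →ₗ[R] ⨁ σ, B (k - 1) σ)
    (dC : ∀ k : ℤ, (⨁ σ, C k σ) →ₗ[R] ⨁ σ, C (k - 1) σ)
    (f : ∀ k : ℤ, (⨁ σ, B k σ) →ₗ[R] ⨁ σ, C k σ)
    -- the differentials square to zero
    (hdB : ∀ k : ℤ, (dB (k - 1)).comp (dB k) = 0)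
    (hdC : ∀ k : ℤ, (dC (k - 1)).comp (dC k) = 0)
    -- `f` is a chain map
    (hchain : ∀ k : ℤ, (f (k - 1)).comp (dB k) = (dC k).comp (f k))
    -- boundedness: only finitely many degrees are nonzero
    (hbdd : ∃ N : ℕ, ∀ k : ℤ, (N : ℤ) < |k| →
      (∀ x : ⨁ σ, B k σ, x = 0) ∧ (∀ y : ⨁ σ, C k σ, y = 0))
    -- the differentials and `f` are upper triangular
    (hUTB : ∀ k : ℤ, IsUpperTriangularMap (dB k))
    (hUTC : ∀ k : ℤ, IsUpperTriangularMap (dC k))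
    (hUTf : ∀ k : ℤ, IsUpperTriangularMap (f k))
    -- each diagonal component of `f` is a quasi-isomorphism
    (hdiag : ∀ σ : X, IsQuasiIso
      (fun k => (DirectSum.component R X (B (k - 1) ·) σ).comp
        ((dB k).comp (DirectSum.lof R X (B k ·) σ)))
      (fun k => (DirectSum.component R X (C (k - 1) ·) σ).comp
        ((dC k).comp (DirectSum.lof R X (C k ·) σ)))
      (fun k => (DirectSum.component R X (C k ·) σ).comp
        ((f k).comp (DirectSum.lof R X (B k ·) σ)))) :
    -- conclusion: `f` is a quasi-isomorphism
    IsQuasiIso dB dC f := by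
  intro k
  have hkey := key_induction B C dB dC f hdB hdC hchain hUTB hUTC hUTf hdiag Finset.univ
    (fun a _ b _ => Finset.mem_univ b) k
  constructor
  · intro y hyc
    obtain ⟨x, _, hxc, z, _, hz⟩ := hkey.1 y (fun τ hτ => absurd (Finset.mem_univ τ) hτ) hyc
    exact ⟨x, hxc, z, hz⟩
  · rintro x hxc ⟨z, hz⟩
    obtain ⟨w, _, hw⟩ := hkey.2 x (fun τ hτ => absurd (Finset.mem_univ τ) hτ) hxc
      ⟨z, fun τ hτ => absurd (Finset.mem_univ τ) hτ, hz⟩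
    exact ⟨w, hw⟩
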